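/- Let H be a finite-dimensional complex inner product space and L ⊆ H a real-linear subspace that is standard. Let T : H → H be the Tomita operator of L and Δ := T† ∘ T the one-particle modular operator. If L is in addition factorial (L ∩ L' = {0}), then 1 is not an eigenvalue of Δ, i.e. ker(Δ − 1) = {0}. -/

import Mathlib

/-!
Write a fixed vector of `Δ` as `x = f + i g` with `f, g ∈ L`. Since `Δ = T† T`, the equation
`Δ x = x` says that `T` preserves the real inner product against `x`:
`Re⟨T x, T y⟩ = Re⟨x, y⟩` for all `y`. Testing this with `y = k` and `y = i k` for `k ∈ L`,
where `T k = k` and `T (i k) = -i k`, gives `Im⟨k, g⟩ = 0` and `Im⟨k, f⟩ = 0`. Thus `f` and `g`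
lie in `L ∩ L' = {0}`.
-/

open Complex

section

variable {H : Type*} [NormedAddCommGroup H] [InnerProductSpace ℂ H]

theorem re_inner_map_map_of_adjoint_map_eq_self {T Tadj : H →ₗ[ℝ] H}
    (hTadj : ∀ x y : H, (inner ℂ (Tadj x) y).re = (inner ℂ x (T y)).re)
    {x : H} (hx : Tadj (T x) = x) (y : H) :
    (inner ℂ (T x) (T y)).re = (inner ℂ x y).re := by
  rw [← hTadj, hx]

theorem im_inner_eq_zero_of_re_inner_sub_eq (f g k : H)
    (h : (inner ℂ (f - I • g) k).re = (inner ℂ (f + I • g) k).re) :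
    (inner ℂ k g).im = 0 := by
  simp only [inner_sub_left, inner_add_left, inner_smul_left, conj_I, sub_re, add_re,
    neg_mul, neg_re, mul_re, I_re, I_im, zero_mul, one_mul, zero_sub] at h
  rw [← inner_conj_symm, conj_im, neg_eq_zero]
  linarith

theorem im_inner_eq_zero_of_re_inner_sub_I_smul_eq (f g k : H)
    (h : (inner ℂ (f - I • g) (-(I • k))).re = (inner ℂ (f + I • g) (I • k)).re) :
    (inner ℂ k f).im = 0 := by
  simp only [inner_neg_right, inner_smul_right, inner_sub_left, inner_add_left, inner_smul_left,
    conj_I, neg_re, sub_re, add_re, mul_re, I_re, I_im, zero_mul, one_mul, zero_sub, sub_im,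
    add_im, neg_im, mul_im, neg_mul] at h
  rw [← inner_conj_symm, conj_im, neg_eq_zero]
  linarith

variable {L : Submodule ℝ H} {T : H →ₗ[ℝ] H}

theorem tomita_apply_of_mem (hT : ∀ f ∈ L, ∀ g ∈ L, T (f + I • g) = f - I • g)
    {k : H} (hk : k ∈ L) : T k = k := by
  simpa using hT k hk 0 L.zero_mem

theorem tomita_apply_I_smul_of_mem (hT : ∀ f ∈ L, ∀ g ∈ L, T (f + I • g) = f - I • g)
    {k : H} (hk : k ∈ L) : T (I • k) = -(I • k) := by
  simpa using hT 0 L.zero_mem k hk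

end

theorem modular_operator_one_not_eigenvalue_of_factorial_general
    {H : Type*} [NormedAddCommGroup H] [InnerProductSpace ℂ H]
    (L L' : Submodule ℝ H)
    -- `L'` is the symplectic complement of `L`
    (hL' : ∀ g : H, g ∈ L' ↔ ∀ f ∈ L, (inner ℂ f g : ℂ).im = 0)
    (hstd₂ : ∀ z : H, ∃ f ∈ L, ∃ g ∈ L, z = f + Complex.I • g)
    -- `T` is the Tomita operator of `L`: `T(f + i g) = f - i g` for `f, g ∈ L`
    (T : H →ₗ[ℝ] H) (hT : ∀ f ∈ L, ∀ g ∈ L, T (f + Complex.I • g) = f - Complex.I • g)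
    -- `T†` is the adjoint of `T` with respect to the real inner product `Re⟨·,·⟩`
    (Tadj : H →ₗ[ℝ] H)
    (hTadj : ∀ x y : H, (inner ℂ (Tadj x) y : ℂ).re = (inner ℂ x (T y) : ℂ).re)
    -- the one-particle modular operator `Δ = T† ∘ T`
    (Δ : H →ₗ[ℝ] H) (hΔ : ∀ x, Δ x = Tadj (T x))
    -- `L` is factorial: `L ∩ L' = {0}`
    (hfac : L ⊓ L' = ⊥) :
    ∀ x : H, Δ x = x → x = 0 := by
  intro x hx
  obtain ⟨f, hf, g, hg, rfl⟩ := hstd₂ x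
  have hTx := hT f hf g hg
  have hiso := re_inner_map_map_of_adjoint_map_eq_self hTadj ((hΔ _).symm.trans hx)
  have hfL' : f ∈ L' := (hL' f).2 fun k hk ↦ im_inner_eq_zero_of_re_inner_sub_I_smul_eq f g k <| by
    rw [← hiso, hTx, tomita_apply_I_smul_of_mem hT hk]
  have hgL' : g ∈ L' := (hL' g).2 fun k hk ↦ im_inner_eq_zero_of_re_inner_sub_eq f g k <| by
    rw [← hiso, hTx, tomita_apply_of_mem hT hk]
  have hLL' := Submodule.disjoint_def.1 (disjoint_iff.2 hfac)
  rw [hLL' f hf hfL', hLL' g hg hgL', smul_zero, add_zero]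

/-- For a standard real subspace `L` of a finite-dimensional complex inner product space,
with Tomita operator `T` and modular operator `Δ = T† T` (adjoint for the real inner
product `Re⟨·,·⟩`): if `L` is factorial, then `1` is not an eigenvalue of `Δ`. -/
theorem modular_operator_one_not_eigenvalue_of_factorial
    {H : Type*} [NormedAddCommGroup H] [InnerProductSpace ℂ H] [FiniteDimensional ℂ H]
    (L L' : Submodule ℝ H)
    -- `L'` is the symplectic complement of `L`
    (hL' : ∀ g : H, g ∈ L' ↔ ∀ f ∈ L, (inner ℂ f g : ℂ).im = 0)
    -- `L` is standard: `L ∩ iL = {0}` and `L + iL = H`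
    (hstd₁ : ∀ x ∈ L, ∀ y ∈ L, x = Complex.I • y → x = 0)
    (hstd₂ : ∀ z : H, ∃ f ∈ L, ∃ g ∈ L, z = f + Complex.I • g)
    -- `T` is the Tomita operator of `L`: `T(f + i g) = f - i g` for `f, g ∈ L`
    (T : H →ₗ[ℝ] H) (hT : ∀ f ∈ L, ∀ g ∈ L, T (f + Complex.I • g) = f - Complex.I • g)
    -- `T†` is the adjoint of `T` with respect to the real inner product `Re⟨·,·⟩`
    (Tadj : H →ₗ[ℝ] H)
    (hTadj : ∀ x y : H, (inner ℂ (Tadj x) y : ℂ).re = (inner ℂ x (T y) : ℂ).re)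
    -- the one-particle modular operator `Δ = T† ∘ T`
    (Δ : H →ₗ[ℝ] H) (hΔ : ∀ x, Δ x = Tadj (T x))
    -- `L` is factorial: `L ∩ L' = {0}`
    (hfac : L ⊓ L' = ⊥) :
    ∀ x : H, Δ x = x → x = 0 :=
  modular_operator_one_not_eigenvalue_of_factorial_general L L' hL' hstd₂ T hT Tadj hTadj Δ hΔ hfac
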